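/- arXiv:1910.13218 — 2 statements merged into one kernel-verified Lean document; each statement's English description precedes it below -/
import Mathlib

section
/- Let f ∈ ℤ[x] be irreducible over ℚ of degree d ≥ 1 with nonzero discriminant. There is a constant C (depending only on f) such that for every prime p dividing disc(f) and every k ≥ 1, the number of roots of f modulo p^k satisfies ρ_f(p^k) ≤ d · disc(f)². -/
/-- The Sylvester-style matrix of two integer polynomials. -/
def sylv (f g : Polynomial ℤ) :
    Matrix (Fin (g.natDegree + f.natDegree)) (Fin (g.natDegree + f.natDegree)) ℤ :=
  Matrix.of fun i j =>
    if (i : ℕ) < g.natDegree then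
      if (i : ℕ) ≤ (j : ℕ) ∧ (j : ℕ) ≤ (i : ℕ) + f.natDegree then f.coeff ((j : ℕ) - (i : ℕ))
      else 0
    else
      if (i : ℕ) - g.natDegree ≤ (j : ℕ) ∧ (j : ℕ) ≤ ((i : ℕ) - g.natDegree) + g.natDegree then
        g.coeff ((j : ℕ) - ((i : ℕ) - g.natDegree))
      else 0

/-- The resultant of two integer polynomials, as a Sylvester determinant. -/
noncomputable def resInt (f g : Polynomial ℤ) : ℤ := (sylv f g).det

/-- The discriminant of an integer polynomial:
`disc f = (-1)^(d(d-1)/2) · res(f, f′) / leadingCoeff f`. -/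
noncomputable def discInt (f : Polynomial ℤ) : ℤ :=
  (-1) ^ (f.natDegree * (f.natDegree - 1) / 2) * (resInt f f.derivative / f.leadingCoeff)

/-- `rho f m` is the number of roots of `f` modulo `m`. -/
def rho (f : Polynomial ℤ) (m : ℕ) : ℕ :=
  ((Finset.range m).filter fun a : ℕ => (m : ℤ) ∣ f.eval (a : ℤ)).card

/-- `alphaExp f p N` is the exponent of the prime `p` in `∏_{n=1}^N |f(n)|`. -/
noncomputable def alphaExp (f : Polynomial ℤ) (p N : ℕ) : ℕ :=
  (∏ n ∈ Finset.Icc 1 N, (f.eval (n : ℤ)).natAbs).factorization p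

/-!
Write `f = p ^ c • g` with `g` nonzero modulo `p`, and let `e = v_p(disc g)`. Modulo `p`, `g` has
at most `deg g` roots. The adjugate of the Sylvester matrix gives a Bezout identity
`u g + v g' = disc g`, so `v_p(g'(a)) ≤ e` whenever `p ^ (e + 1) ∣ g(a)`; by the Taylor expansion
`g(b) - g(a) = (b - a)(g'(a) + O(b - a))`, two roots modulo `p ^ k` (with `k ≥ 2e + 2`) that
agree modulo `p ^ (e + 1)` then agree modulo `p ^ (k - e)`. Hence
`ρ_g(p^k) ≤ p^e ρ_g(p^(e+1)) ≤ p^(2e) deg g`, and `ρ_f(p^k) ≤ p^c ρ_g(p^(k-c))`, which is at most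
`d · disc(f)²` because `disc f = p^(c(2d-2)) disc g`.
-/

open Polynomial Finset Matrix

theorem Prime.pow_sub_dvd_of_pow_dvd_mul {M : Type*} [CommMonoidWithZero M] [IsCancelMulZero M]
    {p a b : M} (hp : Prime p) {k e : ℕ} (h : p ^ k ∣ a * b) (hb : ¬p ^ (e + 1) ∣ b) : p ^ (k - e) ∣ a := by
  induction e generalizing k b with
  | zero => exact hp.pow_dvd_of_dvd_mul_right k (by simpa using hb) h
  | succ e ih =>
    by_cases hpb : p ∣ b
    · obtain ⟨b, rfl⟩ := hpb
      rcases k with _ | k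
      · simp
      rw [pow_succ', mul_left_comm, mul_dvd_mul_iff_left hp.ne_zero] at h
      rw [pow_succ', mul_dvd_mul_iff_left hp.ne_zero] at hb
      simpa using ih h hb
    · exact (pow_dvd_pow p (Nat.sub_le k _)).trans (hp.pow_dvd_of_dvd_mul_right k hpb h)

lemma pow_dvd_pow_mul_iff {M : Type*} [CommMonoidWithZero M] [IsCancelMulZero M] {p : M}
    (hp : p ≠ 0) (k c : ℕ) (y : M) : p ^ k ∣ p ^ c * y ↔ p ^ (k - c) ∣ y := by
  rcases le_total c k with h | h
  · rw [← Nat.sub_add_cancel h, pow_add, Nat.add_sub_cancel, mul_comm (p ^ (k - c)),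
      mul_dvd_mul_iff_left (pow_ne_zero c hp)]
  · simp [Nat.sub_eq_zero_of_le h, (pow_dvd_pow p h).mul_right y]

lemma Polynomial.exists_mul_add_mul_eq_C_discr {R : Type*} [CommRing R] (f : R[X])
    (hf : 2 ≤ f.natDegree) : ∃ u v : R[X], u * f + v * derivative f = C (discr f) := by
  -- `sylvesterDeriv f` is the Sylvester matrix of `(f', f)` with its last row divided by the
  -- leading coefficient; as that row is not row `0`, column `0` of its adjugate still solves the
  -- Sylvester system with right-hand side `det • e₀`, i.e. gives `u`, `v` with `u f + v f' = C det`.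
  let l : Fin (f.natDegree - 1 + f.natDegree) := ⟨2 * f.natDegree - 2, by omega⟩
  let i₀ : Fin (f.natDegree - 1 + f.natDegree) := ⟨0, by omega⟩
  let x := (sylvesterDeriv f).adjugate *ᵥ Pi.single i₀ 1
  have hMx : sylvesterDeriv f *ᵥ x = Pi.single i₀ (sylvesterDeriv f).det := by
    rw [mulVec_mulVec, mul_adjugate, smul_mulVec, one_mulVec, ← Pi.single_smul', smul_eq_mul,
      mul_one]
  have hSx : sylvester (derivative f) f (f.natDegree - 1) f.natDegree *ᵥ x =
      Pi.single i₀ (sylvesterDeriv f).det := by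
    have hl : l ≠ i₀ := by simp [l, i₀, Fin.ext_iff]; omega
    rw [← sylvesterDeriv_updateRow f (by omega), updateRow_mulVec, smul_dotProduct,
      show sylvesterDeriv f l ⬝ᵥ x = (sylvesterDeriv f *ᵥ x) l from rfl, hMx,
      Pi.single_eq_of_ne hl, smul_zero, Function.update_eq_self_iff, Pi.single_eq_of_ne hl]
  let b₁ := ((degreeLT.basis R (f.natDegree - 1)).prod
    (degreeLT.basis R f.natDegree)).reindex finSumFinEquiv
  let b₂ := degreeLT.basis R (f.natDegree - 1 + f.natDegree)
  let Φ := sylvesterMap (derivative f) f (natDegree_derivative_le f) le_rfl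
  let y := b₁.equivFun.symm x
  have hΦy : Φ y = (sylvesterDeriv f).det • b₂ i₀ := by
    apply b₂.repr.injective
    ext j
    have := congrFun (LinearMap.toMatrix_mulVec_repr b₁ b₂ Φ y) j
    rw [toMatrix_sylvesterMap', ← b₁.equivFun_apply, b₁.equivFun.apply_symm_apply, hSx] at this
    rw [← this]
    simp [Pi.single_apply, Finsupp.single_apply, eq_comm]
  have hpoly := congrArg Subtype.val hΦy
  simp only [Φ, b₂, i₀, sylvesterMap_apply_coe, Submodule.coe_smul, degreeLT.basis_val, pow_zero,
    smul_eq_C_mul, mul_one] at hpoly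
  refine ⟨C ((-1) ^ (f.natDegree * (f.natDegree - 1) / 2)) * (y.1 : R[X]),
    C ((-1) ^ (f.natDegree * (f.natDegree - 1) / 2)) * (y.2 : R[X]), ?_⟩
  rw [Polynomial.discr, C_mul, ← hpoly]
  ring

lemma Polynomial.discr_C_mul {R : Type*} [CommRing R] [IsDomain R] (a : R) (ha : a ≠ 0) (f : R[X])
    (hf : 0 < f.natDegree) :
    discr (C a * f) = a ^ (2 * f.natDegree - 2) * discr f := by
  have hdeg : (C a * f).natDegree = f.natDegree := natDegree_C_mul ha
  have key := resultant_deriv (f := C a * f) (natDegree_pos_iff_degree_pos.mp (hdeg ▸ hf))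
  rw [derivative_C_mul, hdeg, resultant_C_mul_left, resultant_C_mul_right,
    resultant_deriv (natDegree_pos_iff_degree_pos.mp hf), leadingCoeff_mul, leadingCoeff_C] at key
  have hunit : (-1) ^ (f.natDegree * (f.natDegree - 1) / 2) * (a * f.leadingCoeff) ≠ 0 :=
    mul_ne_zero (pow_ne_zero _ (neg_ne_zero.mpr one_ne_zero))
      (mul_ne_zero ha (leadingCoeff_ne_zero.mpr (ne_zero_of_natDegree_gt hf)))
  refine mul_left_cancel₀ hunit (key.symm.trans ?_)
  obtain ⟨d, hd⟩ : ∃ d, f.natDegree = d + 1 := ⟨f.natDegree - 1, by omega⟩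
  rw [hd, show 2 * (d + 1) - 2 = d + d by omega, Nat.add_sub_cancel, pow_add, pow_succ]
  ring

lemma Polynomial.pow_sub_dvd_sub_of_pow_dvd_eval {R : Type*} [CommRing R] [IsDomain R] {p : R}
    (hp : Prime p) {f u v : R[X]} {W : R} (hbez : u * f + v * derivative f = C W) {e k : ℕ}
    (hW : ¬p ^ (e + 1) ∣ W) (hk : e + 1 ≤ k) {a b : R} (ha : p ^ k ∣ f.eval a)
    (hb : p ^ k ∣ f.eval b) (hab : p ^ (e + 1) ∣ b - a) : p ^ (k - e) ∣ b - a := by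
  obtain ⟨h, hh⟩ := binomExpansion f a (b - a)
  rw [add_sub_cancel] at hh
  have hslope : f.eval b - f.eval a = (b - a) * (f.derivative.eval a + h * (b - a)) := by
    rw [hh]; ring
  refine hp.pow_sub_dvd_of_pow_dvd_mul (hslope ▸ dvd_sub hb ha) fun hs => hW ?_
  have hW_eval : u.eval a * f.eval a + v.eval a * f.derivative.eval a = W := by
    simpa using congrArg (eval a) hbez
  have hfa : p ^ (e + 1) ∣ f.eval a := (pow_dvd_pow p hk).trans ha
  have hf'a : p ^ (e + 1) ∣ f.derivative.eval a := by
    simpa using dvd_sub hs (dvd_mul_of_dvd_right hab h)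
  rw [← hW_eval]
  exact dvd_add (dvd_mul_of_dvd_right hfa _) (dvd_mul_of_dvd_right hf'a _)

lemma sylv_eq_transpose_sylvester (f g : ℤ[X]) :
    sylv f g = (sylvester g f g.natDegree f.natDegree)ᵀ := by
  ext i j
  induction i using Fin.addCases with
  | left i =>
    simp only [sylv, sylvester, transpose_apply, of_apply, Fin.addCases_left, Set.mem_Icc,
      Fin.val_castAdd, i.isLt, if_true]
  | right i => simp [sylv, sylvester, Set.mem_Icc, add_comm g.natDegree]

lemma resInt_eq_resultant (f g : ℤ[X]) : resInt f g = resultant g f := by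
  rw [resInt, sylv_eq_transpose_sylvester, det_transpose, resultant]

lemma discInt_eq_discr (f : ℤ[X]) (hf : 0 < f.natDegree) : discInt f = discr f := by
  have hlc : f.leadingCoeff ≠ 0 := leadingCoeff_ne_zero.mpr (ne_zero_of_natDegree_gt hf)
  have hres : resInt f (derivative f) = (-1) ^ (f.natDegree * (f.natDegree - 1) / 2) *
      f.leadingCoeff * discr f := by
    rw [resInt_eq_resultant, resultant_comm, natDegree_derivative, mul_comm (f.natDegree - 1),
      ← resultant_deriv (natDegree_pos_iff_degree_pos.mp hf),
      Nat.even_mul_pred_self f.natDegree |>.neg_one_pow, one_mul]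
  rw [discInt, hres, mul_right_comm, Int.mul_ediv_cancel _ hlc, ← mul_assoc, ← pow_add,
    ← two_mul, pow_mul, neg_one_sq, one_pow, one_mul]

lemma card_le_mul_card_image_mod {s : Finset ℕ} {m n : ℕ} (hs : ∀ x ∈ s, x < m * n) :
    #s ≤ n * #(s.image (· % m)) := by
  refine card_le_mul_card_image s n fun b _ => ?_
  calc #{x ∈ s | x % m = b} ≤ #(range n) := by
        refine card_le_card_of_injOn (· / m) (fun x hx => ?_) fun x hx y hy hxy => ?_
        · simp only [coe_filter, Set.mem_ofPred_eq] at hx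
          simpa using Nat.div_lt_of_lt_mul (hs x hx.1)
        · simp only [coe_filter, Set.mem_ofPred_eq] at hx hy
          rw [← Nat.div_add_mod x m, ← Nat.div_add_mod y m, hx.2, hy.2]
          exact congrArg (m * · + b) hxy
    _ = n := card_range n

def zerosMod (f : ℤ[X]) (m M : ℕ) : Finset ℕ := {a ∈ range M | (m : ℤ) ∣ f.eval (a : ℤ)}

lemma rho_eq_card_zerosMod (f : ℤ[X]) (m : ℕ) : rho f m = #(zerosMod f m m) := rfl

lemma mod_mem_zerosMod {f : ℤ[X]} {m m' M a : ℕ} (hm : m' ∣ m) (hm' : 0 < m')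
    (ha : a ∈ zerosMod f m M) : a % m' ∈ zerosMod f m' m' := by
  simp only [zerosMod, mem_filter, mem_range] at ha ⊢
  refine ⟨Nat.mod_lt a hm', ?_⟩
  have hmod : (m' : ℤ) ∣ (a : ℤ) - ((a % m' : ℕ) : ℤ) := Nat.modEq_iff_dvd.mp (Nat.mod_modEq a m')
  have := (dvd_sub ((Int.natCast_dvd_natCast.mpr hm).trans ha.2)
    (hmod.trans (sub_dvd_eval_sub _ _ f)))
  rwa [sub_sub_cancel] at this

lemma card_zerosMod_le_mul_rho {f : ℤ[X]} {m m' M n : ℕ} (hm : m' ∣ m) (hm' : 0 < m')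
    (hM : M ≤ m' * n) : #(zerosMod f m M) ≤ n * rho f m' :=
  calc #(zerosMod f m M) ≤ n * #((zerosMod f m M).image (· % m')) :=
        card_le_mul_card_image_mod fun x hx => by
          simp only [zerosMod, mem_filter, mem_range] at hx; omega
    _ ≤ n * rho f m' := by
        gcongr
        exact card_le_card fun y hy => by
          obtain ⟨a, ha, rfl⟩ := mem_image.mp hy
          exact mod_mem_zerosMod hm hm' ha

lemma rho_pow_le_pow_mul_rho (f : ℤ[X]) {p : ℕ} (hp : 0 < p) {j k : ℕ} (hjk : j ≤ k) :
    rho f (p ^ k) ≤ p ^ (k - j) * rho f (p ^ j) :=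
  card_zerosMod_le_mul_rho (pow_dvd_pow p hjk) (pow_pos hp j) (by rw [← pow_add]; gcongr; omega)

lemma rho_le (f : ℤ[X]) (m : ℕ) : rho f m ≤ m :=
  (card_filter_le _ _).trans (card_range m).le

lemma rho_prime_le_natDegree {f : ℤ[X]} {p : ℕ} (hp : p.Prime) (hpf : ¬C (p : ℤ) ∣ f) :
    rho f p ≤ f.natDegree := by
  have := Fact.mk hp
  set F := f.map (Int.castRingHom (ZMod p))
  have hF : F ≠ 0 := fun hF => hpf <| (C_dvd_iff_dvd_coeff _ _).mpr fun i => by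
    rw [← ZMod.intCast_zmod_eq_zero_iff_dvd, ← eq_intCast (Int.castRingHom (ZMod p)), ← coeff_map]
    change F.coeff i = 0
    rw [hF, coeff_zero]
  calc rho f p ≤ #F.roots.toFinset := by
        refine card_le_card_of_injOn (fun a : ℕ => (a : ZMod p)) (fun a ha => ?_)
          fun a ha b hb hab => ?_
        · simp only [coe_filter, mem_range, Set.mem_ofPred_eq] at ha
          simpa [F, mem_roots hF, eval_map, ← ZMod.intCast_zmod_eq_zero_iff_dvd] using ha.2
        · simp only [coe_filter, mem_range, Set.mem_ofPred_eq] at ha hb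
          simpa [ZMod.val_cast_of_lt ha.1, ZMod.val_cast_of_lt hb.1] using congrArg ZMod.val hab
    _ ≤ Multiset.card F.roots := Multiset.toFinset_card_le _
    _ ≤ F.natDegree := card_roots' F
    _ ≤ f.natDegree := natDegree_map_le

lemma rho_pow_le_of_bezout {f u v : ℤ[X]} {W : ℤ} (hbez : u * f + v * derivative f = C W)
    {p : ℕ} (hp : p.Prime) {e k : ℕ} (hW : ¬(p : ℤ) ^ (e + 1) ∣ W) (hk : 2 * e + 2 ≤ k) :
    rho f (p ^ k) ≤ p ^ e * rho f (p ^ (e + 1)) := by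
  set S := zerosMod f (p ^ k) (p ^ k)
  have hdvd : p ^ (e + 1) ∣ p ^ (k - e) := pow_dvd_pow p (by omega)
  have hclose : ∀ x ∈ S, ∀ y ∈ S, x ≡ y [MOD p ^ (e + 1)] → x ≡ y [MOD p ^ (k - e)] := by
    intro x hx y hy hxy
    simp only [S, zerosMod, mem_filter, mem_range] at hx hy
    rw [Nat.modEq_iff_dvd] at hxy ⊢
    push_cast at hxy hx hy ⊢
    exact pow_sub_dvd_sub_of_pow_dvd_eval (Nat.prime_iff_prime_int.mp hp) hbez hW (by omega)
      hx.2 hy.2 hxy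
  calc rho f (p ^ k) = #S := rfl
    _ ≤ p ^ e * #(S.image (· % p ^ (k - e))) := card_le_mul_card_image_mod fun x hx => by
        simp only [S, zerosMod, mem_filter, mem_range] at hx
        rw [← pow_add, Nat.sub_add_cancel (by omega)]
        exact hx.1
    _ = p ^ e * #((S.image (· % p ^ (k - e))).image (· % p ^ (e + 1))) := by
        congr 1
        refine (card_image_of_injOn ?_).symm
        rintro _ hx' _ hy' hxy
        obtain ⟨x, hx, rfl⟩ := mem_image.mp hx'
        obtain ⟨y, hy, rfl⟩ := mem_image.mp hy'
        simp only [Nat.mod_mod_of_dvd _ hdvd] at hxy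
        exact hclose x hx y hy hxy
    _ ≤ p ^ e * rho f (p ^ (e + 1)) := by
        rw [image_image]
        gcongr
        refine card_le_card fun z hz => ?_
        obtain ⟨x, hx, rfl⟩ := mem_image.mp hz
        simp only [Function.comp_apply, Nat.mod_mod_of_dvd _ hdvd]
        exact mod_mem_zerosMod (pow_dvd_pow p (by omega)) (pow_pos hp.pos _) hx

lemma rho_prime_pow_le_of_not_C_dvd {f : ℤ[X]} {p : ℕ} (hp : p.Prime) (hd : 2 ≤ f.natDegree)
    (hpf : ¬C (p : ℤ) ∣ f) {e : ℕ} (he : ¬(p : ℤ) ^ (e + 1) ∣ discr f) (k : ℕ) :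
    rho f (p ^ k) ≤ f.natDegree * p ^ (2 * e) := by
  have hρp := rho_prime_le_natDegree hp hpf
  rcases Nat.lt_or_ge k 1 with hk | hk
  · calc rho f (p ^ k) ≤ p ^ k := rho_le f _
      _ = 1 := by rw [Nat.lt_one_iff.mp hk, pow_zero]
      _ ≤ f.natDegree * p ^ (2 * e) := Nat.mul_pos (by omega) (pow_pos hp.pos _)
  rcases Nat.lt_or_ge k (2 * e + 2) with hk' | hk'
  · calc rho f (p ^ k) ≤ p ^ (k - 1) * rho f (p ^ 1) := rho_pow_le_pow_mul_rho f hp.pos hk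
      _ ≤ p ^ (2 * e) * f.natDegree := by
          rw [pow_one]
          gcongr
          · exact hp.one_le
          · omega
      _ = f.natDegree * p ^ (2 * e) := mul_comm _ _
  · obtain ⟨u, v, hbez⟩ := exists_mul_add_mul_eq_C_discr f hd
    calc rho f (p ^ k) ≤ p ^ e * rho f (p ^ (e + 1)) := rho_pow_le_of_bezout hbez hp he hk'
      _ ≤ p ^ e * (p ^ e * rho f (p ^ 1)) := by
          gcongr
          simpa using rho_pow_le_pow_mul_rho f hp.pos (j := 1) (k := e + 1) (by omega)
      _ ≤ p ^ e * (p ^ e * f.natDegree) := by rw [pow_one]; gcongr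
      _ = f.natDegree * p ^ (2 * e) := by ring

lemma rho_C_pow_mul_le (g : ℤ[X]) {p : ℕ} (hp : 0 < p) (c k : ℕ) :
    rho (C ((p : ℤ) ^ c) * g) (p ^ k) ≤ p ^ c * rho g (p ^ (k - c)) := by
  have hzeros : zerosMod (C ((p : ℤ) ^ c) * g) (p ^ k) (p ^ k) = zerosMod g (p ^ (k - c)) (p ^ k) :=
    filter_congr fun a _ => by
      push_cast
      rw [eval_mul, eval_C, pow_dvd_pow_mul_iff (by exact_mod_cast hp.ne')]
  rw [rho_eq_card_zerosMod, hzeros]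
  exact card_zerosMod_le_mul_rho dvd_rfl (pow_pos hp _) (by rw [← pow_add]; gcongr; omega)

theorem rho_prime_pow_le_natDegree_mul_discr_sq {f : ℤ[X]} {p : ℕ} (hp : p.Prime)
    (hd : 2 ≤ f.natDegree) (hdisc : discr f ≠ 0) (k : ℕ) :
    (rho f (p ^ k) : ℤ) ≤ f.natDegree * discr f ^ 2 := by
  have hp0 : (p : ℤ) ≠ 0 := by exact_mod_cast hp.ne_zero
  have hpunit : ¬IsUnit (p : ℤ) := Int.isUnit_iff_natAbs_eq.not.mpr (by simpa using hp.ne_one)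
  obtain ⟨c, g, hpg, rfl⟩ := WfDvdMonoid.max_power_factor' (ne_zero_of_natDegree_gt hd)
    (mt isUnit_C.mp hpunit)
  rw [← C_pow] at hdisc hd ⊢
  rw [natDegree_C_mul (pow_ne_zero c hp0)] at hd ⊢
  rw [discr_C_mul _ (pow_ne_zero c hp0) g (by omega)] at hdisc ⊢
  obtain ⟨e, D, hpD, hD⟩ := WfDvdMonoid.max_power_factor' (right_ne_zero_of_mul hdisc) hpunit
  have he : ¬(p : ℤ) ^ (e + 1) ∣ discr g := by
    rwa [hD, pow_succ, mul_dvd_mul_iff_left (pow_ne_zero e hp0)]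
  have hcore := rho_prime_pow_le_of_not_C_dvd hp hd hpg he (k - c)
  have hD2 : 1 ≤ D ^ 2 := by
    have : D ≠ 0 := by rintro rfl; exact hpD (dvd_zero _)
    have := pow_pos (abs_pos.mpr this) 2
    rw [sq_abs] at this
    omega
  calc (rho (C ((p : ℤ) ^ c) * g) (p ^ k) : ℤ) ≤ p ^ c * (g.natDegree * p ^ (2 * e)) := by
        exact_mod_cast (rho_C_pow_mul_le g hp.pos c k).trans (Nat.mul_le_mul_left _ hcore)
    _ ≤ ((p : ℤ) ^ c) ^ (2 * (2 * g.natDegree - 2)) * (g.natDegree * p ^ (2 * e) * D ^ 2) := by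
        refine mul_le_mul ?_ (le_mul_of_one_le_right (by positivity) hD2) (by positivity)
          (by positivity)
        exact le_self_pow₀ (one_le_pow₀ (by exact_mod_cast hp.one_le)) (by omega)
    _ = g.natDegree * (((p : ℤ) ^ c) ^ (2 * g.natDegree - 2) * discr g) ^ 2 := by
        rw [hD]; ring

theorem rho_prime_pow_ramified_le_general (f : Polynomial ℤ) (hdeg : 1 ≤ f.natDegree)
    (hdisc : discInt f ≠ 0) (p : ℕ) (hp : p.Prime) (hpd : (p : ℤ) ∣ discInt f)
    (k : ℕ) :
    (rho f (p ^ k) : ℤ) ≤ (f.natDegree : ℤ) * (discInt f) ^ 2 := by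
  rw [discInt_eq_discr f hdeg] at hdisc hpd ⊢
  have hd : 2 ≤ f.natDegree := by
    by_contra hd
    rw [discr_of_degree_eq_one ((degree_eq_iff_natDegree_eq_of_pos one_pos).mpr (by omega))] at hpd
    exact hp.not_dvd_one (Int.natCast_dvd_natCast.mp hpd)
  exact rho_prime_pow_le_natDegree_mul_discr_sq hp hd hdisc k

/-- If `f ∈ ℤ[x]` is irreducible over `ℚ` of degree `d ≥ 1` with nonzero discriminant, then
for every prime `p ∣ disc f` and every `k ≥ 1`: `ρ_f(p^k) ≤ d · (disc f)²`. -/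
theorem rho_prime_pow_ramified_le (f : Polynomial ℤ)
    (hirr : Irreducible (f.map (Int.castRingHom ℚ))) (hdeg : 1 ≤ f.natDegree)
    (hdisc : discInt f ≠ 0) (p : ℕ) (hp : p.Prime) (hpd : (p : ℤ) ∣ discInt f)
    (k : ℕ) (hk : 1 ≤ k) :
    (rho f (p ^ k) : ℤ) ≤ (f.natDegree : ℤ) * (discInt f) ^ 2 :=
  rho_prime_pow_ramified_le_general f hdeg hdisc p hp hpd k
end

section
/- Let f ∈ ℤ[x] be a polynomial with integer coefficients that is irreducible over ℚ and has degree d ≥ 2. Define, for large N, the set 𝒩 := {n ∈ ℕ : N/log N ≤ n ≤ N and P⁺(f(n)) > n} and 𝒫 := {P⁺(f(n)) : n ∈ 𝒩}. Then for N sufficiently large, #𝒫 ≥ #𝒩 / d. -/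
open scoped Classical

/-- The largest prime factor of an integer `m`, with the convention
`P⁺(0) = P⁺(±1) = 1`. -/
def maxPrimeFac (m : ℤ) : ℕ := max (m.natAbs.primeFactors.sup id) 1

lemma maxPrimeFac_prime_dvd {m : ℤ} (h : 1 < maxPrimeFac m) :
    (maxPrimeFac m).Prime ∧ ((maxPrimeFac m : ℤ)) ∣ m := by
  unfold maxPrimeFac at *
  set s := m.natAbs.primeFactors with hs
  have hsup : 1 < s.sup id := by
    rcases max_cases (s.sup id) 1 with ⟨h1, h2⟩ | ⟨h1, h2⟩ <;> omega
  have hne : s.Nonempty := by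
    rcases Finset.eq_empty_or_nonempty s with he | hne
    · rw [he] at hsup; simp at hsup
    · exact hne
  obtain ⟨q, hq, hq2⟩ := Finset.exists_mem_eq_sup s hne id
  have hmax : max (s.sup id) 1 = s.sup id := max_eq_left (le_of_lt hsup)
  rw [hmax, hq2]
  simp only [id] at *
  refine ⟨Nat.prime_of_mem_primeFactors hq, ?_⟩
  have := Nat.dvd_of_mem_primeFactors hq
  exact dvd_trans (Int.natCast_dvd_natCast.mpr this) (Int.natAbs_dvd.mpr dvd_rfl)

/-- For `f ∈ ℤ[x]` irreducible over `ℚ` of degree `d ≥ 2`, with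
`𝒩 = {N/log N ≤ n ≤ N : P⁺(f(n)) > n}` and `𝒫 = {P⁺(f(n)) : n ∈ 𝒩}`, one has
`#𝒫 ≥ #𝒩/d` for all sufficiently large `N`. -/
theorem card_prime_factors_ge (f : Polynomial ℤ)
    (hirr : Irreducible (f.map (Int.castRingHom ℚ))) (hdeg : 2 ≤ f.natDegree) :
    ∃ N₀ : ℕ, ∀ N ≥ N₀,
      ((((Finset.Icc 1 N).filter fun n : ℕ =>
          (N : ℝ) / Real.log N ≤ (n : ℝ) ∧ n < maxPrimeFac (f.eval (n : ℤ))).card : ℝ) /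
            f.natDegree) ≤
        (((Finset.Icc 1 N).filter fun n : ℕ =>
            (N : ℝ) / Real.log N ≤ (n : ℝ) ∧ n < maxPrimeFac (f.eval (n : ℤ))).image
          fun n : ℕ => maxPrimeFac (f.eval (n : ℤ))).card := by
  classical
  have hf0 : f ≠ 0 := by
    rintro rfl
    simp only [Polynomial.map_zero] at hirr
    exact not_irreducible_zero hirr
  have hlc : f.leadingCoeff ≠ 0 := Polynomial.leadingCoeff_ne_zero.mpr hf0
  set C : ℕ := f.leadingCoeff.natAbs with hC
  have hC0 : C ≠ 0 := by simpa [hC, Int.natAbs_eq_zero] using hlc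
  -- eventually N / log N > C
  have htend : Filter.Tendsto (fun x : ℝ => Real.log x / (1 * x + 0)) Filter.atTop (nhds 0) :=
    Real.tendsto_pow_log_div_mul_add_atTop 1 0 1 one_ne_zero |>.congr (by simp)
  have hlt : (0 : ℝ) < 1 / ((C : ℝ) + 1) := by positivity
  have hev : ∀ᶠ x : ℝ in Filter.atTop, (C : ℝ) < x / Real.log x := by
    filter_upwards [htend.eventually (eventually_lt_nhds hlt),
      Filter.eventually_gt_atTop (1 : ℝ)] with x hx hx1
    simp only [one_mul, add_zero] at hx
    have hlog : 0 < Real.log x := Real.log_pos hx1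
    have hxpos : (0 : ℝ) < x := by linarith
    rw [div_lt_div_iff₀ hxpos (by positivity)] at hx
    rw [lt_div_iff₀ hlog]
    nlinarith
  obtain ⟨N₀, hN₀⟩ := Filter.eventually_atTop.mp
    (tendsto_natCast_atTop_atTop.eventually hev)
  refine ⟨N₀, fun N hN => ?_⟩
  have hClt : (C : ℝ) < (N : ℝ) / Real.log N := hN₀ N hN
  set s := (Finset.Icc 1 N).filter fun n : ℕ =>
      (N : ℝ) / Real.log N ≤ (n : ℝ) ∧ n < maxPrimeFac (f.eval (n : ℤ)) with hsdef
  -- key cardinality bound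
  have hkey : s.card ≤ f.natDegree *
      (s.image fun n : ℕ => maxPrimeFac (f.eval (n : ℤ))).card := by
    apply Finset.card_le_mul_card_image
    intro p hp
    -- p is prime and > C
    obtain ⟨n₀, hn₀s, hn₀p⟩ := Finset.mem_image.mp hp
    simp only [hsdef, Finset.mem_filter, Finset.mem_Icc] at hn₀s
    have hn₀1 : 1 ≤ n₀ := hn₀s.1.1
    have hpgt : 1 < maxPrimeFac (f.eval (n₀ : ℤ)) := lt_of_le_of_lt hn₀1 hn₀s.2.2
    obtain ⟨hpprime, -⟩ := maxPrimeFac_prime_dvd hpgt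
    rw [hn₀p] at hpprime
    have hCn₀ : C < n₀ := by exact_mod_cast lt_of_lt_of_le hClt hn₀s.2.1
    have hpC : C < p := lt_of_lt_of_le hCn₀ (le_of_lt (hn₀p ▸ hn₀s.2.2))
    haveI : Fact p.Prime := ⟨hpprime⟩
    set fp := f.map (Int.castRingHom (ZMod p)) with hfp
    have hfp0 : fp ≠ 0 := by
      intro h
      have hcoeff : fp.coeff f.natDegree = ((f.leadingCoeff : ℤ) : ZMod p) := by
        rw [hfp, Polynomial.coeff_map]; rfl
      rw [h, Polynomial.coeff_zero] at hcoeff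
      have hdvd : (p : ℤ) ∣ f.leadingCoeff :=
        (ZMod.intCast_zmod_eq_zero_iff_dvd _ _).mp hcoeff.symm
      have : p ∣ C := by
        have := Int.natAbs_dvd_natAbs.mpr hdvd
        simpa [hC] using this
      exact absurd (Nat.le_of_dvd (Nat.pos_of_ne_zero hC0) this) (not_le.mpr hpC)
    -- fiber injects into roots of fp
    have hinj : ∀ m ∈ s.filter (fun m : ℕ => maxPrimeFac (f.eval (m : ℤ)) = p),
        (((m : ℕ) : ZMod p)) ∈ fp.roots.toFinset := by
      intro m hm
      simp only [Finset.mem_filter, hsdef, Finset.mem_Icc] at hm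
      obtain ⟨⟨⟨hm1, -⟩, -, hmlt⟩, hmp⟩ := hm
      rw [hmp] at hmlt
      have hdvd : ((p : ℤ)) ∣ f.eval (m : ℤ) := by
        have := maxPrimeFac_prime_dvd (m := f.eval (m : ℤ)) (by omega)
        rw [hmp] at this; exact this.2
      rw [Multiset.mem_toFinset, Polynomial.mem_roots hfp0]
      have heval : fp.eval ((m : ℤ) : ZMod p) = ((f.eval (m : ℤ) : ℤ) : ZMod p) :=
        Polynomial.eval_intCast_map _ _ _
      rw [Polynomial.IsRoot]
      push_cast at heval ⊢
      rw [heval, ZMod.intCast_zmod_eq_zero_iff_dvd]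
      exact hdvd
    have hcard : (s.filter (fun m : ℕ => maxPrimeFac (f.eval (m : ℤ)) = p)).card ≤
        fp.roots.toFinset.card := by
      apply Finset.card_le_card_of_injOn (fun m : ℕ => ((m : ZMod p))) hinj
      intro m1 hm1 m2 hm2 heq
      simp only [Finset.coe_filter, Set.mem_setOf_eq, hsdef, Finset.mem_filter,
        Finset.mem_Icc] at hm1 hm2
      have h1 : m1 < p := hm1.1.2.2.trans_eq hm1.2
      have h2 : m2 < p := hm2.1.2.2.trans_eq hm2.2
      have := congrArg ZMod.val heq
      rwa [ZMod.val_cast_of_lt h1, ZMod.val_cast_of_lt h2] at this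
    calc (s.filter (fun m : ℕ => maxPrimeFac (f.eval (m : ℤ)) = p)).card
        ≤ fp.roots.toFinset.card := hcard
      _ ≤ Multiset.card fp.roots := fp.roots.toFinset_card_le
      _ ≤ fp.natDegree := fp.card_roots'
      _ ≤ f.natDegree := Polynomial.natDegree_map_le
  -- conclude
  have hdpos : 0 < f.natDegree := by omega
  rw [div_le_iff₀ (by exact_mod_cast hdpos)]
  exact_mod_cast (Nat.mul_comm f.natDegree _ ▸ hkey)
end
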